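/- If G and H are connected graphs with v_s(G) = γ(G) and v_s(H) = Z(H), then γ_P(G □ H) = γ(G)·Z(H). -/

import Mathlib

namespace PaperPD

open SimpleGraph

variable {V : Type} {W : Type}

/-- Observation process for power domination on a simple graph. -/
inductive Observed (G : SimpleGraph V) (S : Set V) : V → Prop
  | mem : ∀ v ∈ S, Observed G S v
  | dom : ∀ u v, u ∈ S → G.Adj u v → Observed G S v
  | prop : ∀ u v, Observed G S u → G.Adj u v →
      (∀ w, G.Adj u w → w ≠ v → Observed G S w) → Observed G S v

/-- `S` is a power dominating set of `G`. -/
def IsPDS (G : SimpleGraph V) (S : Set V) : Prop := ∀ v, Observed G S v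

/-- Power domination number. -/
noncomputable def pdNum (G : SimpleGraph V) [Fintype V] : ℕ :=
  sInf {n | ∃ S : Finset V, S.card = n ∧ IsPDS G ↑S}

/-- Zero forcing process. -/
inductive Forced (G : SimpleGraph V) (S : Set V) : V → Prop
  | mem : ∀ v ∈ S, Forced G S v
  | prop : ∀ u v, Forced G S u → G.Adj u v →
      (∀ w, G.Adj u w → w ≠ v → Forced G S w) → Forced G S v

/-- Zero forcing number. -/
noncomputable def zNum (G : SimpleGraph V) [Fintype V] : ℕ :=
  sInf {n | ∃ S : Finset V, S.card = n ∧ ∀ v, Forced G S v}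

/-- Domination number. -/
noncomputable def domNum (G : SimpleGraph V) [Fintype V] : ℕ :=
  sInf {n | ∃ S : Finset V, S.card = n ∧ ∀ v, ∃ u ∈ S, v = u ∨ G.Adj u v}

/-- No induced `K_{1,3}`. -/
def ClawFree (G : SimpleGraph V) : Prop :=
  ∀ x a b c : V, a ≠ b → a ≠ c → b ≠ c →
    G.Adj x a → G.Adj x b → G.Adj x c →
    ¬ G.Adj a b → ¬ G.Adj a c → ¬ G.Adj b c → False

/-- No induced `K₄` minus an edge. -/
def DiamondFree (G : SimpleGraph V) : Prop :=
  ∀ a b c d : V, a ≠ b → a ≠ c → a ≠ d → b ≠ c → b ≠ d → c ≠ d →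
    G.Adj a b → G.Adj a c → G.Adj b c → G.Adj b d → G.Adj c d →
    ¬ G.Adj a d → False

/-- A leaf: a vertex with exactly one neighbor. -/
def IsLeaf (G : SimpleGraph V) (v : V) : Prop := ∃! u, G.Adj v u

/-- A strong support vertex: adjacent to at least two leaves. -/
def IsStrongSupport (G : SimpleGraph V) (x : V) : Prop :=
  ∃ a b, a ≠ b ∧ G.Adj x a ∧ G.Adj x b ∧ IsLeaf G a ∧ IsLeaf G b

/-- Number of strong support vertices. -/
noncomputable def ssCount (G : SimpleGraph V) : ℕ :=
  Nat.card {v // IsStrongSupport G v}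

/-- Connected with no bridges. -/
def TwoEdgeConnected (G : SimpleGraph V) : Prop :=
  G.Connected ∧ ∀ e, ¬ G.IsBridge e

/-- A loopless multigraph, given by symmetric edge multiplicities. -/
structure Multigraph (W : Type) where
  mult : W → W → ℕ
  symm : ∀ u v, mult u v = mult v u
  loopless : ∀ v, mult v v = 0

/-- Underlying simple graph of a multigraph. -/
def Multigraph.toSimple (M : Multigraph W) : SimpleGraph W where
  Adj u v := u ≠ v ∧ 0 < M.mult u v
  symm := ⟨by intro u v h; exact ⟨h.1.symm, by rw [M.symm]; exact h.2⟩⟩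
  loopless := ⟨by intro v h; exact h.1 rfl⟩

/-- Degree of a vertex in a multigraph (counting multiplicities). -/
def Multigraph.degree [Fintype W] (M : Multigraph W) (v : W) : ℕ :=
  ∑ u, M.mult v u

/-- Bridgeless multigraph: no single edge is a cut edge (a parallel edge
is never a bridge). -/
def Multigraph.Bridgeless (M : Multigraph W) : Prop :=
  ∀ u v, M.mult u v = 1 → ¬ M.toSimple.IsBridge s(u, v)

/-- A 2-factor of a multigraph, given by sub-multiplicities. -/
def Multigraph.IsTwoFactor [Fintype W] (M : Multigraph W) (f : W → W → ℕ) : Prop :=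
  (∀ u v, f u v ≤ M.mult u v) ∧ (∀ u v, f u v = f v u) ∧ (∀ v, ∑ u, f v u = 2)

/-- Observation process for power domination on a multigraph: propagation
only happens along single edges. -/
inductive MObserved (M : Multigraph W) (S : Set W) : W → Prop
  | mem : ∀ v ∈ S, MObserved M S v
  | dom : ∀ u v, u ∈ S → 0 < M.mult u v → MObserved M S v
  | prop : ∀ u v, MObserved M S u → M.mult u v = 1 →
      (∀ w, 0 < M.mult u w → w ≠ v → MObserved M S w) → MObserved M S v

/-- Power domination number of a multigraph. -/
noncomputable def mpdNum (M : Multigraph W) [Fintype W] : ℕ :=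
  sInf {n | ∃ S : Finset W, S.card = n ∧ ∀ v, MObserved M ↑S v}

/-!
Upper bound: if `D` dominates `G` and `B` is a zero forcing set of `H`, then `D ×ˢ B` power
dominates `G □ H`. The domination step observes every layer `V × {b}` with `b ∈ B`, and then
each fibre `{v} × W` replays the forcing chain of `B`: when `(v, u)` forces `(v, w)`, its
remaining `G`-neighbours `(z, u)` lie in an already observed layer.

Lower bound: let `x` and `y` be strong support vertices of `G` and `H`, and call `x` together
with its leaf neighbours the star of `x`. If `S` misses (star of `x`) × (star of `y`), no vertex
`(a, b)` with `a`, `b` leaves at `x`, `y` is ever observed: its only neighbours are `(x, b)` and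
`(a, y)`, and each of these has a second neighbour of the same kind, so it cannot force. Stars of
distinct strong support vertices are disjoint, hence `|S| ≥ v_s(G) v_s(H)`.
-/

lemma IsLeaf.eq_of_adj {G : SimpleGraph V} {a x z : V} (ha : IsLeaf G a)
    (hx : G.Adj a x) (hz : G.Adj a z) : z = x := by
  obtain ⟨u, -, hu⟩ := ha
  rw [hu z hz, hu x hx]

lemma IsStrongSupport.exists_leaf_ne {G : SimpleGraph V} {x : V} (hx : IsStrongSupport G x)
    (c : V) : ∃ a, a ≠ c ∧ G.Adj x a ∧ IsLeaf G a := by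
  obtain ⟨a, b, hab, hxa, hxb, ha, hb⟩ := hx
  by_cases hac : a = c
  · exact ⟨b, hac ▸ hab.symm, hxb, hb⟩
  · exact ⟨a, hac, hxa, ha⟩

lemma IsStrongSupport.not_isLeaf {G : SimpleGraph V} {x : V} (hx : IsStrongSupport G x) :
    ¬ IsLeaf G x := by
  rintro ⟨u, -, hu⟩
  obtain ⟨a, b, hab, hxa, hxb, -, -⟩ := hx
  exact hab ((hu a hxa).trans (hu b hxb).symm)

def pendantStar (G : SimpleGraph V) (x : V) : Set V :=
  insert x {a | G.Adj x a ∧ IsLeaf G a}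

lemma eq_of_mem_pendantStar {G : SimpleGraph V} {x x' c : V}
    (hx : IsStrongSupport G x) (hx' : IsStrongSupport G x')
    (hc : c ∈ pendantStar G x) (hc' : c ∈ pendantStar G x') : x = x' := by
  rcases hc with rfl | ⟨hxc, hc⟩ <;> rcases hc' with rfl | ⟨hxc', hc'⟩
  · rfl
  · exact absurd hc' hx.not_isLeaf
  · exact absurd hc hx'.not_isLeaf
  · exact (hc.eq_of_adj hxc.symm hxc'.symm).symm

lemma boxProd_adj_of_isLeaf {G : SimpleGraph V} {H : SimpleGraph W} {x : V} {y : W}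
    {u v : V × W} (hx : G.Adj x v.1) (hv₁ : IsLeaf G v.1) (hy : H.Adj y v.2)
    (hv₂ : IsLeaf H v.2) (huv : (G □ H).Adj u v) : u = (x, v.2) ∨ u = (v.1, y) := by
  rcases boxProd_adj.mp huv with ⟨hadj, h⟩ | ⟨hadj, h⟩
  · exact Or.inl (Prod.ext (hv₁.eq_of_adj hx.symm hadj.symm) h)
  · exact Or.inr (Prod.ext h (hv₂.eq_of_adj hy.symm hadj.symm))

lemma exists_mem_pendantStar_prod {G : SimpleGraph V} {H : SimpleGraph W} {S : Set (V × W)}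
    (hS : IsPDS (G □ H) S) {x : V} {y : W} (hx : IsStrongSupport G x)
    (hy : IsStrongSupport H y) :
    ∃ p ∈ S, p.1 ∈ pendantStar G x ∧ p.2 ∈ pendantStar H y := by
  by_contra! hmiss
  have unobserved : ∀ p, Observed (G □ H) S p →
      G.Adj x p.1 → IsLeaf G p.1 → H.Adj y p.2 → IsLeaf H p.2 → False := by
    intro p hp
    induction hp with
    | mem v hv =>
      intro hx₁ hl₁ hy₂ hl₂
      exact hmiss v hv (Or.inr ⟨hx₁, hl₁⟩) (Or.inr ⟨hy₂, hl₂⟩)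
    | dom u v hu huv =>
      intro hx₁ hl₁ hy₂ hl₂
      rcases boxProd_adj_of_isLeaf hx₁ hl₁ hy₂ hl₂ huv with rfl | rfl
      · exact hmiss _ hu (Or.inl rfl) (Or.inr ⟨hy₂, hl₂⟩)
      · exact hmiss _ hu (Or.inr ⟨hx₁, hl₁⟩) (Or.inl rfl)
    | prop u v _ huv _ _ ih =>
      intro hx₁ hl₁ hy₂ hl₂
      rcases boxProd_adj_of_isLeaf hx₁ hl₁ hy₂ hl₂ huv with rfl | rfl
      · obtain ⟨a, hav, hxa, ha⟩ := hx.exists_leaf_ne v.1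
        exact ih (a, v.2) (boxProd_adj_left.mpr hxa) (fun h => hav (congrArg Prod.fst h))
          hxa ha hy₂ hl₂
      · obtain ⟨b, hbv, hyb, hb⟩ := hy.exists_leaf_ne v.2
        exact ih (v.1, b) (boxProd_adj_right.mpr hyb) (fun h => hbv (congrArg Prod.snd h))
          hx₁ hl₁ hyb hb
  obtain ⟨a, -, hxa, ha⟩ := hx.exists_leaf_ne x
  obtain ⟨b, -, hyb, hb⟩ := hy.exists_leaf_ne y
  exact unobserved (a, b) (hS (a, b)) hxa ha hyb hb

lemma ssCount_mul_ssCount_le_card {G : SimpleGraph V} {H : SimpleGraph W} {S : Finset (V × W)}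
    (hS : IsPDS (G □ H) S) : ssCount G * ssCount H ≤ S.card := by
  choose f hfS hf₁ hf₂ using
    fun q : {x // IsStrongSupport G x} × {y // IsStrongSupport H y} =>
      exists_mem_pendantStar_prod hS q.1.2 q.2.2
  have hinj : Function.Injective fun q => (⟨f q, hfS q⟩ : S) := by
    rintro ⟨x, y⟩ ⟨x', y'⟩ h
    have hf : f (x, y) = f (x', y') := congrArg Subtype.val h
    exact Prod.ext (Subtype.ext (eq_of_mem_pendantStar x.2 x'.2 (hf₁ _) (hf ▸ hf₁ _)))
      (Subtype.ext (eq_of_mem_pendantStar y.2 y'.2 (hf₂ _) (hf ▸ hf₂ _)))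
  calc ssCount G * ssCount H
      = Nat.card ({x // IsStrongSupport G x} × {y // IsStrongSupport H y}) :=
        (Nat.card_prod _ _).symm
    _ ≤ Nat.card S := Nat.card_le_card_of_injective _ hinj
    _ = S.card := Nat.card_eq_finsetCard S

lemma isPDS_boxProd_product {G : SimpleGraph V} {H : SimpleGraph W} {D : Finset V}
    {B : Finset W} (hD : ∀ v, ∃ u ∈ D, v = u ∨ G.Adj u v) (hB : ∀ w, Forced H B w) :
    IsPDS (G □ H) ↑(D ×ˢ B) := by
  suffices ∀ w, Forced H B w → ∀ v, Observed (G □ H) ↑(D ×ˢ B) (v, w) from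
    fun p => this p.2 (hB p.2) p.1
  intro w hw
  induction hw with
  | mem b hb =>
    intro v
    obtain ⟨d, hd, rfl | hdv⟩ := hD v
    · exact Observed.mem _ (Finset.mem_product.mpr ⟨hd, hb⟩)
    · exact Observed.dom (d, b) _ (Finset.mem_product.mpr ⟨hd, hb⟩) (boxProd_adj_left.mpr hdv)
  | prop u w _ huw _ ihu ih =>
    intro v
    refine Observed.prop (v, u) (v, w) (ihu v) (boxProd_adj_right.mpr huw) ?_
    rintro ⟨z₁, z₂⟩ hz hne
    rcases boxProd_adj.mp hz with ⟨-, rfl⟩ | ⟨hu₂, rfl⟩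
    · exact ihu z₁
    · exact ih z₂ hu₂ (fun h => hne (h ▸ rfl)) v

lemma exists_card_eq_pdNum [Fintype V] (G : SimpleGraph V) :
    ∃ S : Finset V, S.card = pdNum G ∧ IsPDS G S :=
  Nat.sInf_mem (s := {n | ∃ S : Finset V, S.card = n ∧ IsPDS G S})
    ⟨_, Finset.univ, rfl, fun v => Observed.mem v (Finset.mem_coe.mpr (Finset.mem_univ v))⟩

lemma pdNum_le_card [Fintype V] {G : SimpleGraph V} {S : Finset V} (hS : IsPDS G S) :
    pdNum G ≤ S.card :=
  Nat.sInf_le ⟨S, rfl, hS⟩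

lemma exists_card_eq_domNum [Fintype V] (G : SimpleGraph V) :
    ∃ D : Finset V, D.card = domNum G ∧ ∀ v, ∃ u ∈ D, v = u ∨ G.Adj u v :=
  Nat.sInf_mem (s := {n | ∃ D : Finset V, D.card = n ∧ ∀ v, ∃ u ∈ D, v = u ∨ G.Adj u v})
    ⟨_, Finset.univ, rfl, fun v => ⟨v, Finset.mem_univ v, Or.inl rfl⟩⟩

lemma exists_card_eq_zNum [Fintype V] (G : SimpleGraph V) :
    ∃ B : Finset V, B.card = zNum G ∧ ∀ v, Forced G B v :=
  Nat.sInf_mem (s := {n | ∃ B : Finset V, B.card = n ∧ ∀ v, Forced G B v})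
    ⟨_, Finset.univ, rfl, fun v => Forced.mem v (Finset.mem_coe.mpr (Finset.mem_univ v))⟩

lemma pdNum_boxProd_le [Fintype V] [Fintype W] (G : SimpleGraph V) (H : SimpleGraph W) :
    pdNum (G □ H) ≤ domNum G * zNum H := by
  obtain ⟨D, hD, hDdom⟩ := exists_card_eq_domNum G
  obtain ⟨B, hB, hBforce⟩ := exists_card_eq_zNum H
  calc pdNum (G □ H) ≤ (D ×ˢ B).card := pdNum_le_card (isPDS_boxProd_product hDdom hBforce)
    _ = domNum G * zNum H := by rw [Finset.card_product, hD, hB]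

lemma ssCount_mul_ssCount_le_pdNum [Fintype V] [Fintype W] (G : SimpleGraph V)
    (H : SimpleGraph W) : ssCount G * ssCount H ≤ pdNum (G □ H) := by
  obtain ⟨S, hS, hSpds⟩ := exists_card_eq_pdNum (G □ H)
  exact hS ▸ ssCount_mul_ssCount_le_card hSpds

theorem stmt16_general {V W : Type} [Fintype V] [Fintype W]
    (G : SimpleGraph V) (H : SimpleGraph W)
    (h₁ : ssCount G = domNum G) (h₂ : ssCount H = zNum H) :
    pdNum (G.boxProd H) = domNum G * zNum H :=
  le_antisymm (pdNum_boxProd_le G H) (h₁ ▸ h₂ ▸ ssCount_mul_ssCount_le_pdNum G H)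

theorem stmt16 {V W : Type} [Fintype V] [Fintype W]
    (G : SimpleGraph V) (H : SimpleGraph W)
    (hG : G.Connected) (hH : H.Connected)
    (h₁ : ssCount G = domNum G) (h₂ : ssCount H = zNum H) :
    pdNum (G.boxProd H) = domNum G * zNum H :=
  stmt16_general G H h₁ h₂

end PaperPD
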